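/- arXiv:2604.20326 — 5 statements merged into one kernel-verified Lean document; each statement's English description precedes it below -/
import Mathlib

section
/- Let p, q be positive integers with p ≥ q. Then for all z in the unit disk Δ, S_κ^{[p,q]}(z) = -p! · z^{p-q}/(1-z²)^{p+q} · Σ_{d=0}^{q-1} C_d z^{2d}, where C_d = [(p-1)!/(p-q)!] · [(-q)_d (1-q)_d] / [d! (p-q+1)_d], and (a)_n denotes the shifted factorial (a)_n = a(a+1)⋯(a+n-1), (a)_0 = 1. -/
open MeasureTheory Finset

noncomputable section

/-- The open unit disk in the complex plane. -/
def unitDisk : Set ℂ := {z : ℂ | ‖z‖ < 1}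

/-- The squared weighted Bergman norm
`‖φ‖²_α = (α+1) ∬_Δ |φ(z)|² (1-|z|²)^α dxdy / π`. -/
def bergmanNormSq (α : ℝ) (φ : ℂ → ℂ) : ℝ :=
  (α + 1) * (∫ z in unitDisk, ‖φ z‖ ^ 2 * (1 - ‖z‖ ^ 2) ^ α) / Real.pi

/-- The weighted Bergman norm. -/
def bergmanNorm (α : ℝ) (φ : ℂ → ℂ) : ℝ :=
  Real.sqrt (bergmanNormSq α φ)

/-- Membership in the weighted Bergman space `A²_α`: analytic on the unit disk
with finite weighted square integral. -/
def memBergman (α : ℝ) (φ : ℂ → ℂ) : Prop :=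
  AnalyticOn ℂ φ unitDisk ∧
  IntegrableOn (fun z => ‖φ z‖ ^ 2 * (1 - ‖z‖ ^ 2) ^ α) unitDisk

/-- The multiplier norm `‖g‖_{M_{α,β}} = sup{‖gφ‖_β/‖φ‖_α : φ ∈ A²_α, φ ≠ 0}`. -/
def multiplierNorm (α β : ℝ) (g : ℂ → ℂ) : ℝ :=
  sSup {t : ℝ | ∃ φ : ℂ → ℂ, memBergman α φ ∧ (∃ z ∈ unitDisk, φ z ≠ 0) ∧
    t = bergmanNorm β (fun z => g z * φ z) / bergmanNorm α φ}

/-- The higher-order Schwarzian derivative of the Koebe function: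
`S_κ^{[p,q]}(z) = -Σ_{n ≥ max(p,q)} (n!)²/(n·(n-p)!·(n-q)!) z^{2n-p-q}`. -/
def koebeHigherSchwarzian (p q : ℕ) (z : ℂ) : ℂ :=
  -∑' n : ℕ, if max p q ≤ n then
      ((n.factorial : ℂ) ^ 2 /
        ((n : ℂ) * ((n - p).factorial : ℂ) * ((n - q).factorial : ℂ)))
        * z ^ (2 * n - p - q)
    else 0

/-!
For `n ≥ p` the series coefficient `n!² / (n (n-p)! (n-q)!)` is the integer
`n(n-1)⋯(n-p+1) · (n-1)(n-2)⋯(n-q+1)`, and Vandermonde's identity splits it as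
`p! (q-1)! ∑_{k ≤ q} C(q,k) C(q-k+p-1, q-1) C(n-1, q-k+p-1)`. Summed against `w = z²`, each
`C(n-1, q-k+p-1)` gives `w^(q-k) / (1-w)^(p+q-k)`, which reduces the claim to the polynomial
identity `∑_{k ≤ q} C(q,k) C(q-k+p-1, q-1) w^(q-k) (1-w)^k = ∑_{d < q} C(q,d) C(p-1, q-1-d) w^d`.
Its right side is `∑_d C(q,d) C(p-1, q-1-d) x^d (x+y)^(q-d)` at `x = w`, `y = 1 - w`; expanding
`(x+y)^(q-d)` and applying Vandermonde once more yields the left side. Finally the Pochhammer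
coefficients of the statement are `C_d = (q-1)! C(q,d) C(p-1, q-1-d)`.
-/

open Nat

theorem Nat.choose_mul_choose_sub_comm (n a b : ℕ) :
    n.choose a * (n - a).choose b = n.choose b * (n - b).choose a := by
  by_cases hab : a + b ≤ n
  · have key := Nat.choose_mul (n := n) (k := n - a) (s := b) (by omega)
    rwa [Nat.choose_symm (by omega), show n - a - b = n - b - a by omega,
      Nat.choose_symm (by omega)] at key
  · rw [mul_eq_zero.2 (by simp only [Nat.choose_eq_zero_iff]; omega),
      mul_eq_zero.2 (by simp only [Nat.choose_eq_zero_iff]; omega)]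

theorem Nat.sum_range_choose_mul_choose (a b k : ℕ) :
    ∑ i ∈ range (k + 1), a.choose i * b.choose (k - i) = (a + b).choose k := by
  rw [Nat.add_choose_eq, Nat.sum_antidiagonal_eq_sum_range_succ_mk]

theorem Nat.descFactorial_mul_descFactorial_pred_eq_sum {p q n : ℕ} (hq : 0 < q) (hqp : q ≤ p)
    (hpn : p ≤ n) :
    n.descFactorial p * (n - 1).descFactorial (q - 1) =
      p ! * (q - 1)! * ∑ k ∈ range (q + 1),
        q.choose k * (q - k + (p - 1)).choose (q - 1) * (n - 1).choose (q - k + (p - 1)) := by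
  have vandermonde : ∑ k ∈ range (q + 1), q.choose k * (n - q).choose (p - k) = n.choose p := by
    rw [sum_subset (range_subset_range.2 (by omega : q + 1 ≤ p + 1)),
      Nat.sum_range_choose_mul_choose, Nat.add_sub_cancel' (by omega)]
    intro k _ hk
    rw [mem_range, not_lt] at hk
    rw [Nat.choose_eq_zero_of_lt (by omega), zero_mul]
  have term : ∀ k ∈ range (q + 1),
      q.choose k * (q - k + (p - 1)).choose (q - 1) * (n - 1).choose (q - k + (p - 1)) =
        (n - 1).choose (q - 1) * (q.choose k * (n - q).choose (p - k)) := by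
    intro k hk
    rw [mem_range] at hk
    have := Nat.choose_mul (n := n - 1) (k := q - k + (p - 1)) (s := q - 1) (by omega)
    rw [show n - 1 - (q - 1) = n - q by omega, show q - k + (p - 1) - (q - 1) = p - k by omega]
      at this
    rw [mul_assoc, mul_comm _ ((n - 1).choose _), this]
    ring
  rw [sum_congr rfl term, ← mul_sum, vandermonde, Nat.descFactorial_eq_factorial_mul_choose,
    Nat.descFactorial_eq_factorial_mul_choose]
  ring

theorem Nat.cast_factorial_sq_div {K : Type*} [Field K] [CharZero K] {p q n : ℕ} (hq : 0 < q)
    (hpn : p ≤ n) (hqn : q ≤ n) :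
    (n ! : K) ^ 2 / ((n : K) * (n - p)! * (n - q)!) =
      ((n.descFactorial p * (n - 1).descFactorial (q - 1) : ℕ) : K) := by
  have split : n ! ^ 2 =
      n.descFactorial p * (n - 1).descFactorial (q - 1) * (n * (n - p)! * (n - q)!) := by
    have lower := Nat.factorial_mul_descFactorial (show q - 1 ≤ n - 1 by omega)
    rw [show n - 1 - (q - 1) = n - q by omega] at lower
    rw [sq]
    nth_rw 1 [← Nat.factorial_mul_descFactorial hpn, ← Nat.mul_factorial_pred (by omega : n ≠ 0),
      ← lower]
    ring
  have hn : (n : K) ≠ 0 := Nat.cast_ne_zero.2 (by omega)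
  have hfac : ∀ m : ℕ, (m ! : K) ≠ 0 := fun m => Nat.cast_ne_zero.2 (Nat.factorial_ne_zero m)
  rw [div_eq_iff (mul_ne_zero (mul_ne_zero hn (hfac _)) (hfac _))]
  exact_mod_cast split

theorem sum_choose_mul_pow_mul_add_pow {R : Type*} [CommSemiring R] (m : ℕ) {q : ℕ} (hq : 0 < q)
    (x y : R) :
    ∑ d ∈ range q, ((q.choose d * m.choose (q - 1 - d) : ℕ) : R) * x ^ d * (x + y) ^ (q - d) =
      ∑ k ∈ range (q + 1), ((q.choose k * (q - k + m).choose (q - 1) : ℕ) : R) *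
        x ^ (q - k) * y ^ k := by
  have expand : ∀ d ∈ range q, ((q.choose d : ℕ) : R) * x ^ d * (x + y) ^ (q - d) =
      ∑ k ∈ range (q + 1), ((q.choose k * (q - k).choose d : ℕ) : R) * x ^ (q - k) * y ^ k := by
    intro d hd
    rw [mem_range] at hd
    rw [add_comm, add_pow, mul_sum,
      sum_subset (range_subset_range.2 (by omega : q - d + 1 ≤ q + 1)) ?vanish]
    case vanish =>
      intro k _ hk
      rw [mem_range, not_lt] at hk
      rw [Nat.choose_eq_zero_of_lt (n := q - d) (k := k) (by omega)]
      simp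
    refine sum_congr rfl fun k hkq => ?_
    rw [mem_range] at hkq
    by_cases hk : k ≤ q - d
    · rw [← Nat.choose_mul_choose_sub_comm, show q - k = d + (q - d - k) by omega, pow_add]
      push_cast
      ring
    · rw [Nat.choose_eq_zero_of_lt (n := q - d) (k := k) (by omega),
        Nat.choose_eq_zero_of_lt (n := q - k) (k := d) (by omega)]
      simp
  calc ∑ d ∈ range q, ((q.choose d * m.choose (q - 1 - d) : ℕ) : R) * x ^ d * (x + y) ^ (q - d)
      = ∑ d ∈ range q, ((m.choose (q - 1 - d) : ℕ) : R) * ∑ k ∈ range (q + 1),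
          ((q.choose k * (q - k).choose d : ℕ) : R) * x ^ (q - k) * y ^ k := by
        refine sum_congr rfl fun d hd => ?_
        rw [← expand d hd]
        push_cast
        ring
    _ = ∑ k ∈ range (q + 1), ((q.choose k : ℕ) : R) *
          ((∑ d ∈ range (q - 1 + 1), (q - k).choose d * m.choose (q - 1 - d) : ℕ) : R) *
            x ^ (q - k) * y ^ k := by
        rw [Nat.sub_add_cancel hq]
        push_cast [mul_sum, sum_mul]
        rw [sum_comm]
        refine sum_congr rfl fun k _ => sum_congr rfl fun d _ => ?_
        ring
    _ = _ := by
        refine sum_congr rfl fun k _ => ?_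
        rw [Nat.sum_range_choose_mul_choose]
        push_cast
        ring

theorem sum_choose_mul_pow_div_one_sub_pow {K : Type*} [Field K] {p q : ℕ} (hq : 0 < q)
    (hqp : q ≤ p) {w : K} (hw : 1 - w ≠ 0) :
    ∑ k ∈ range (q + 1), ((q.choose k * (q - k + (p - 1)).choose (q - 1) : ℕ) : K) *
        (w ^ (q - k) / (1 - w) ^ (q - k + (p - 1) + 1)) =
      (∑ d ∈ range q, ((q.choose d * (p - 1).choose (q - 1 - d) : ℕ) : K) * w ^ d) /
        (1 - w) ^ (p + q) := by
  have homogeneous := sum_choose_mul_pow_mul_add_pow (p - 1) hq w (1 - w)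
  simp only [add_sub_cancel, one_pow, mul_one] at homogeneous
  rw [homogeneous, sum_div]
  refine sum_congr rfl fun k hk => ?_
  rw [mem_range] at hk
  rw [show p + q = q - k + (p - 1) + 1 + k by omega, pow_add]
  field_simp
  ring

theorem hasSum_choose_add_mul_geometric {𝕜 : Type*} [NormedField 𝕜] (r m : ℕ) {w : 𝕜}
    (hw : ‖w‖ < 1) :
    HasSum (fun j => ((j + m).choose (r + m) : 𝕜) * w ^ j) (w ^ r / (1 - w) ^ (r + m + 1)) := by
  have shifted : HasSum (fun i => (((i + r) + m).choose (r + m) : 𝕜) * w ^ (i + r))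
      (w ^ r / (1 - w) ^ (r + m + 1)) := by
    have terms : (fun i => (((i + r) + m).choose (r + m) : 𝕜) * w ^ (i + r)) =
        fun i => w ^ r * (((i + (r + m)).choose (r + m) : 𝕜) * w ^ i) := by
      ext i
      rw [add_assoc, pow_add]
      ring
    rw [terms, ← mul_one_div]
    exact (hasSum_choose_mul_geometric_of_norm_lt_one (r + m) hw).mul_left (w ^ r)
  have initial_vanish : ∑ i ∈ range r, ((i + m).choose (r + m) : 𝕜) * w ^ i = 0 :=
    sum_eq_zero fun i hi => by
      rw [Nat.choose_eq_zero_of_lt (by rw [mem_range] at hi; omega), Nat.cast_zero, zero_mul]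
  have := (hasSum_nat_add_iff (f := fun j => ((j + m).choose (r + m) : 𝕜) * w ^ j) r).1 shifted
  rwa [initial_vanish, add_zero] at this

theorem hasSum_descFactorial_mul_geometric {𝕜 : Type*} [NormedField 𝕜] {p q : ℕ} (hq : 0 < q)
    (hqp : q ≤ p) {w : 𝕜} (hw : ‖w‖ < 1) :
    HasSum (fun j =>
        (((j + p).descFactorial p * (j + (p - 1)).descFactorial (q - 1) : ℕ) : 𝕜) * w ^ j)
      (p ! * (q - 1)! *
        ((∑ d ∈ range q, ((q.choose d * (p - 1).choose (q - 1 - d) : ℕ) : 𝕜) * w ^ d) /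
          (1 - w) ^ (p + q))) := by
  have hw1 : 1 - w ≠ 0 := sub_ne_zero.2 fun h => by
    rw [← h, norm_one] at hw
    exact lt_irrefl _ hw
  rw [← sum_choose_mul_pow_div_one_sub_pow hq hqp hw1, mul_sum]
  refine (hasSum_sum fun k _ =>
    (((hasSum_choose_add_mul_geometric (q - k) (p - 1) hw).mul_left
      ((q.choose k * (q - k + (p - 1)).choose (q - 1) : ℕ) : 𝕜)).mul_left
        (p ! * (q - 1)! : 𝕜))).congr_fun fun j => ?_
  rw [show j + (p - 1) = j + p - 1 by omega,
    Nat.descFactorial_mul_descFactorial_pred_eq_sum hq hqp (by omega)]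
  push_cast
  rw [mul_sum, sum_mul]
  refine sum_congr rfl fun k _ => ?_
  rw [show j + p - 1 = j + (p - 1) by omega]
  ring

theorem hasSum_koebeHigherSchwarzian {p q : ℕ} (hq : 0 < q) (hqp : q ≤ p) {z : ℂ}
    (hz : ‖z‖ < 1) :
    HasSum (fun n : ℕ => if max p q ≤ n then
        ((n ! : ℂ) ^ 2 / ((n : ℂ) * ((n - p)! : ℂ) * ((n - q)! : ℂ))) * z ^ (2 * n - p - q)
      else 0)
      (z ^ (p - q) * (p ! * (q - 1)! *
        ((∑ d ∈ range q, ((q.choose d * (p - 1).choose (q - 1 - d) : ℕ) : ℂ) * (z ^ 2) ^ d) /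
          (1 - z ^ 2) ^ (p + q)))) := by
  have hw : ‖z ^ 2‖ < 1 := by
    rw [norm_pow]
    exact pow_lt_one₀ (norm_nonneg z) hz two_ne_zero
  rw [← hasSum_nat_add_iff' p, sum_eq_zero fun i hi => if_neg (by rw [mem_range] at hi; omega),
    sub_zero]
  refine ((hasSum_descFactorial_mul_geometric hq hqp hw).mul_left (z ^ (p - q))).congr_fun
    fun j => ?_
  rw [if_pos (max_le (by omega) (by omega)), Nat.cast_factorial_sq_div hq (by omega) (by omega),
    show 2 * (j + p) - p - q = p - q + 2 * j by omega, pow_add, pow_mul,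
    show j + p - 1 = j + (p - 1) by omega]
  ring

theorem Nat.factorial_pred_mul_descFactorial_mul_descFactorial_pred {p q d : ℕ} (hdq : d < q)
    (hqp : q ≤ p) :
    (p - 1)! * q.descFactorial d * (q - 1).descFactorial d =
      (q - 1)! * q.choose d * (p - 1).choose (q - 1 - d) * d ! * (p - q + d)! := by
  rw [← Nat.factorial_mul_descFactorial (show d ≤ q - 1 by omega),
    ← Nat.choose_mul_factorial_mul_factorial (show q - 1 - d ≤ p - 1 by omega),
    show p - 1 - (q - 1 - d) = p - q + d by omega, Nat.descFactorial_eq_factorial_mul_choose q d]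
  ring

theorem ascPochhammer_eval_neg_natCast {R : Type*} [CommRing R] (n d : ℕ) :
    (ascPochhammer R d).eval (-(n : R)) = (-1) ^ d * n.descFactorial d := by
  rw [ascPochhammer_eval_neg_eq_descPochhammer, descPochhammer_eval_eq_descFactorial]

theorem koebe_coeff_eq_choose {p q d : ℕ} (hdq : d < q) (hqp : q ≤ p) :
    (((p - 1)! : ℝ) / (p - q)!) *
        ((ascPochhammer ℝ d).eval (-(q : ℝ)) * (ascPochhammer ℝ d).eval (1 - (q : ℝ))) /
        ((d ! : ℝ) * (ascPochhammer ℝ d).eval ((p : ℝ) - q + 1)) =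
      (((q - 1)! * q.choose d * (p - 1).choose (q - 1 - d) : ℕ) : ℝ) := by
  have hq1 : (1 : ℝ) - q = -((q - 1 : ℕ) : ℝ) := by
    rw [Nat.cast_sub (by omega : 1 ≤ q)]
    push_cast
    ring
  have hpq : (p : ℝ) - q + 1 = ((p - q : ℕ) : ℝ) + 1 := by
    rw [Nat.cast_sub hqp]
  have rising : (ascPochhammer ℝ d).eval ((p : ℝ) - q + 1) = (p - q + d)! / (p - q)! := by
    rw [eq_div_iff (Nat.cast_ne_zero.2 (Nat.factorial_ne_zero _)), hpq, mul_comm,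
      factorial_mul_ascPochhammer]
  have hsign : ((-1 : ℝ) ^ d) ^ 2 = 1 := by
    rw [← pow_mul, mul_comm, pow_mul, neg_one_sq, one_pow]
  have key := congrArg (Nat.cast : ℕ → ℝ)
    (Nat.factorial_pred_mul_descFactorial_mul_descFactorial_pred hdq hqp)
  push_cast at key ⊢
  rw [hq1, ascPochhammer_eval_neg_natCast, ascPochhammer_eval_neg_natCast, rising]
  field_simp
  rw [hsign, mul_one]
  linear_combination key

/-- Explicit formula for the higher-order Schwarzian derivative of the Koebe function:
`S_κ^{[p,q]}(z) = -p! z^{p-q}/(1-z²)^{p+q} Σ_{d=0}^{q-1} C_d z^{2d}` where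
`C_d = (p-1)!/(p-q)! · (-q)_d (1-q)_d / (d! (p-q+1)_d)`. -/
theorem stmt1 (p q : ℕ) (hq : 0 < q) (hpq : q ≤ p) (z : ℂ) (hz : z ∈ unitDisk) :
    koebeHigherSchwarzian p q z =
      -(p.factorial : ℂ) * z ^ (p - q) / (1 - z ^ 2) ^ (p + q) *
        ∑ d ∈ Finset.range q,
          Complex.ofReal
            ((((p - 1).factorial : ℝ) / ((p - q).factorial : ℝ)) *
              ((ascPochhammer ℝ d).eval (-(q : ℝ)) * (ascPochhammer ℝ d).eval (1 - (q : ℝ))) /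
              ((d.factorial : ℝ) * (ascPochhammer ℝ d).eval ((p : ℝ) - (q : ℝ) + 1)))
            * z ^ (2 * d) := by
  rw [koebeHigherSchwarzian, (hasSum_koebeHigherSchwarzian hq hpq hz).tsum_eq,
    sum_congr rfl fun d hd => congrArg (fun c : ℝ => (c : ℂ) * z ^ (2 * d))
      (koebe_coeff_eq_choose (mem_range.1 hd) hpq)]
  simp_rw [pow_mul]
  push_cast
  simp_rw [mul_assoc, ← mul_sum]
  ring
end
end

section
/- Let p, q be positive integers. Then for all z in the unit disk Δ, |S_κ^{[p,q]}(z)| ≤ (p+q-1)!/|1-z²|^{p+q}. -/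
open MeasureTheory Finset

noncomputable section

/-!
Assume `p ≤ q` (the series is symmetric in `p, q`) and put `n = m + q`, `u = z²`. The coefficient
`(n!)² / (n (n-p)! (n-q)!)` equals `q! (p-1)! C(n,q) C(n-1,p-1)`, and a triple Vandermonde
computation gives `C(n,q) C(n-1,p-1) = ∑_{j<p} C(p,j) C(q-1,p-1-j) C(n+p-1-j, p+q-1)`. Summing the
shifted negative binomial series `∑_m C(m+p+q-1-j, p+q-1) u^m = u^j / (1-u)^(p+q)` yields
`S_κ^{[p,q]}(z) = -q! (p-1)! z^(q-p) N(z²) / (1-z²)^(p+q)` with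
`N(u) = ∑_{j<p} C(p,j) C(q-1,p-1-j) u^j`.
On the disk `|N(z²)| ≤ N(1) = C(p+q-1,p-1)`, and `q! (p-1)! C(p+q-1,p-1) = (p+q-1)!`.
-/

namespace Nat

theorem add_choose_eq_sum_range (a b k : ℕ) :
    (a + b).choose k = ∑ i ∈ range (k + 1), a.choose i * b.choose (k - i) := by
  rw [add_choose_eq, Finset.Nat.sum_antidiagonal_eq_sum_range_succ_mk]

theorem choose_mul_choose_sub_comm_s3 (n i j : ℕ) :
    n.choose i * (n - i).choose j = n.choose j * (n - j).choose i := by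
  have hi := Nat.choose_mul (n := n) (k := i + j) (s := i) (Nat.le_add_right i j)
  have hj := Nat.choose_mul (n := n) (k := i + j) (s := j) (Nat.le_add_left j i)
  rw [Nat.add_sub_cancel_left] at hi
  rw [Nat.add_sub_cancel] at hj
  rw [← hi, ← hj, Nat.choose_symm_add]

theorem sum_choose_mul_choose_mul_choose_sub (p q i : ℕ) (hp : 0 < p) :
    ∑ j ∈ range p, p.choose j * (q - 1).choose (p - 1 - j) * (p - j).choose i
      = p.choose i * (p - i + (q - 1)).choose (p - 1) := by
  have hvand := Nat.add_choose_eq_sum_range (p - i) (q - 1) (p - 1)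
  rw [Nat.sub_add_cancel hp] at hvand
  rw [hvand, mul_sum]
  refine sum_congr rfl fun j _ => ?_
  rw [mul_right_comm, Nat.choose_mul_choose_sub_comm_s3, mul_assoc]

theorem sum_choose_mul_choose_mul_choose_add_sub (p q n : ℕ) (hp : 0 < p) (hpq : p ≤ q)
    (hqn : q ≤ n) :
    ∑ j ∈ range p, p.choose j * (q - 1).choose (p - 1 - j) * (n + p - 1 - j).choose (p + q - 1)
      = n.choose q * (n - 1).choose (p - 1) := by
  calc
    _ = ∑ j ∈ range p, ∑ i ∈ range (p + q), p.choose j * (q - 1).choose (p - 1 - j)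
          * ((p - j).choose i * (n - 1).choose (p + q - 1 - i)) := by
      refine sum_congr rfl fun j hj => ?_
      rw [mem_range] at hj
      rw [show n + p - 1 - j = (p - j) + (n - 1) by omega, Nat.add_choose_eq_sum_range,
        show p + q - 1 + 1 = p + q by omega, mul_sum]
    _ = ∑ i ∈ range (p + q), p.choose i * (p - i + (q - 1)).choose (p - 1)
          * (n - 1).choose (p + q - 1 - i) := by
      rw [sum_comm]
      refine sum_congr rfl fun i _ => ?_
      rw [← sum_choose_mul_choose_mul_choose_sub p q i hp, sum_mul]
      exact sum_congr rfl fun j _ => by ring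
    _ = ∑ i ∈ range (p + q), (n - 1).choose (p - 1) * (p.choose i * (n - p).choose (q - i)) := by
      refine sum_congr rfl fun i _ => ?_
      rcases le_or_gt i p with hip | hip
      · rw [show p - i + (q - 1) = p + q - 1 - i by omega, mul_assoc, mul_comm _ ((n - 1).choose _),
          Nat.choose_mul (by omega : p - 1 ≤ p + q - 1 - i),
          show n - 1 - (p - 1) = n - p by omega, show p + q - 1 - i - (p - 1) = q - i by omega]
        ring
      · simp [Nat.choose_eq_zero_of_lt hip]
    _ = (n - 1).choose (p - 1) * ∑ i ∈ range (q + 1), p.choose i * (n - p).choose (q - i) := by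
      rw [← mul_sum]
      congr 1
      refine (sum_subset (fun i => by simp only [mem_range]; omega) fun i _ hi => ?_).symm
      rw [mem_range, not_lt] at hi
      rw [Nat.choose_eq_zero_of_lt (by omega : p < i), zero_mul]
    _ = n.choose q * (n - 1).choose (p - 1) := by
      rw [← Nat.add_choose_eq_sum_range, Nat.add_sub_cancel' (hpq.trans hqn), mul_comm]

theorem factorial_mul_factorial_eq_mul_choose_mul_choose (p q n : ℕ) (hp : 0 < p) (hpn : p ≤ n)
    (hqn : q ≤ n) :
    n.factorial * n.factorial
      = q.factorial * (p - 1).factorial * (n.choose q * (n - 1).choose (p - 1))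
        * (n * (n - p).factorial * (n - q).factorial) := by
  have hq := choose_mul_factorial_mul_factorial hqn
  have hp' := choose_mul_factorial_mul_factorial (n := n - 1) (k := p - 1) (by omega)
  rw [show n - 1 - (p - 1) = n - p by omega] at hp'
  calc n.factorial * n.factorial
      = (n.choose q * q.factorial * (n - q).factorial) * (n * (n - 1).factorial) := by
        rw [hq, mul_factorial_pred (by omega)]
    _ = _ := by rw [← hp']; ring

end Nat

theorem factorial_sq_div_eq_choose_mul_choose {K : Type*} [Field K] [CharZero K] (p q n : ℕ)
    (hp : 0 < p) (hpn : p ≤ n) (hqn : q ≤ n) :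
    (n.factorial : K) ^ 2 / ((n : K) * ((n - p).factorial : K) * ((n - q).factorial : K))
      = ((q.factorial * (p - 1).factorial * (n.choose q * (n - 1).choose (p - 1)) : ℕ) : K) := by
  have hn : (n : K) ≠ 0 := by exact_mod_cast (hp.trans_le hpn).ne'
  have hfact (k : ℕ) : (k.factorial : K) ≠ 0 := by exact_mod_cast k.factorial_ne_zero
  rw [div_eq_iff (mul_ne_zero (mul_ne_zero hn (hfact _)) (hfact _)), sq]
  exact_mod_cast Nat.factorial_mul_factorial_eq_mul_choose_mul_choose p q n hp hpn hqn

theorem hasSum_choose_add_sub_mul_geometric {𝕜 : Type*} [NormedField 𝕜] [CompleteSpace 𝕜]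
    {N j : ℕ} (hj : j ≤ N) {u : 𝕜} (hu : ‖u‖ < 1) :
    HasSum (fun m : ℕ => ((m + N - j).choose N : 𝕜) * u ^ m) (u ^ j / (1 - u) ^ (N + 1)) := by
  have hvanish : ∑ i ∈ range j, ((i + N - j).choose N : 𝕜) * u ^ i = 0 :=
    sum_eq_zero fun i hi => by
      rw [Nat.choose_eq_zero_of_lt (by rw [mem_range] at hi; omega), Nat.cast_zero, zero_mul]
  rw [← hasSum_nat_add_iff' j, hvanish, sub_zero, ← mul_one_div]
  refine ((hasSum_choose_mul_geometric_of_norm_lt_one N hu).mul_left (u ^ j)).congr_fun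
    fun m => ?_
  rw [show m + j + N - j = m + N by omega, pow_add]
  ring

def koebeNumerator (p q : ℕ) (u : ℂ) : ℂ :=
  ∑ j ∈ range p, ((p.choose j * (q - 1).choose (p - 1 - j) : ℕ) : ℂ) * u ^ j

theorem hasSum_koebeNumerator_div (p q : ℕ) (hp : 0 < p) (hpq : p ≤ q) {u : ℂ}
    (hu : ‖u‖ < 1) :
    HasSum (fun m : ℕ => (((m + q).choose q * (m + q - 1).choose (p - 1) : ℕ) : ℂ) * u ^ m)
      (koebeNumerator p q u / (1 - u) ^ (p + q)) := by
  have h := hasSum_sum fun j (hj : j ∈ range p) =>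
    (hasSum_choose_add_sub_mul_geometric (N := p + q - 1) (j := j) (by rw [mem_range] at hj; omega)
      hu).mul_left ((p.choose j * (q - 1).choose (p - 1 - j) : ℕ) : ℂ)
  simp_rw [show p + q - 1 + 1 = p + q by omega, ← mul_div_assoc, ← sum_div] at h
  refine h.congr_fun fun m => ?_
  rw [← Nat.sum_choose_mul_choose_mul_choose_add_sub p q (m + q) hp hpq (by omega), Nat.cast_sum,
    sum_mul]
  refine sum_congr rfl fun j _ => ?_
  rw [show m + q + p - 1 - j = m + (p + q - 1) - j by omega]
  push_cast
  ring

theorem koebeHigherSchwarzian_eq (p q : ℕ) (hp : 0 < p) (hpq : p ≤ q) {z : ℂ}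
    (hz : ‖z‖ < 1) :
    koebeHigherSchwarzian p q z = -((q.factorial * (p - 1).factorial : ℕ) * z ^ (q - p)
      * (koebeNumerator p q (z ^ 2) / (1 - z ^ 2) ^ (p + q))) := by
  have hz2 : ‖z ^ 2‖ < 1 := by
    rw [norm_pow]
    exact pow_lt_one₀ (norm_nonneg z) hz two_ne_zero
  rw [koebeHigherSchwarzian, max_eq_right hpq]
  congr 1
  refine HasSum.tsum_eq ?_
  have hvanish : ∑ i ∈ range q, (if q ≤ i then ((i.factorial : ℂ) ^ 2 /
      ((i : ℂ) * ((i - p).factorial : ℂ) * ((i - q).factorial : ℂ))) * z ^ (2 * i - p - q)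
      else 0) = 0 :=
    sum_eq_zero fun i hi => if_neg (by rw [mem_range] at hi; omega)
  rw [← hasSum_nat_add_iff' q, hvanish, sub_zero]
  refine ((hasSum_koebeNumerator_div p q hp hpq hz2).mul_left _).congr_fun fun m => ?_
  rw [if_pos (Nat.le_add_left q m),
    factorial_sq_div_eq_choose_mul_choose p q (m + q) hp (by omega) (by omega),
    show 2 * (m + q) - p - q = (q - p) + 2 * m by omega, pow_add, pow_mul]
  push_cast
  ring

theorem norm_koebeNumerator_le (p q : ℕ) (hp : 0 < p) (hq : 0 < q) {u : ℂ} (hu : ‖u‖ ≤ 1) :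
    ‖koebeNumerator p q u‖ ≤ (p + q - 1).choose (p - 1) := by
  have hvand := Nat.add_choose_eq_sum_range p (q - 1) (p - 1)
  rw [Nat.sub_add_cancel hp, show p + (q - 1) = p + q - 1 by omega] at hvand
  rw [hvand, Nat.cast_sum]
  refine (norm_sum_le _ _).trans (sum_le_sum fun j _ => ?_)
  rw [norm_mul, norm_pow, Complex.norm_natCast]
  exact mul_le_of_le_one_right (Nat.cast_nonneg _) (pow_le_one₀ (norm_nonneg u) hu)

theorem norm_koebeHigherSchwarzian_le_of_le (p q : ℕ) (hp : 0 < p) (hpq : p ≤ q) {z : ℂ}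
    (hz : ‖z‖ < 1) :
    ‖koebeHigherSchwarzian p q z‖ ≤ ((p + q - 1).factorial : ℝ) / ‖1 - z ^ 2‖ ^ (p + q) := by
  have hz2 : ‖z ^ 2‖ ≤ 1 := by
    rw [norm_pow]
    exact pow_le_one₀ (norm_nonneg z) hz.le
  have hfact : (p + q - 1).choose (p - 1) * (p - 1).factorial * q.factorial
      = (p + q - 1).factorial := by
    have h := Nat.choose_mul_factorial_mul_factorial (n := p + q - 1) (k := p - 1) (by omega)
    rwa [show p + q - 1 - (p - 1) = q by omega] at h
  rw [koebeHigherSchwarzian_eq p q hp hpq hz, norm_neg, norm_mul, norm_mul, norm_div, norm_pow,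
    norm_pow, Complex.norm_natCast, ← mul_div_assoc, ← hfact]
  gcongr
  calc ((q.factorial * (p - 1).factorial : ℕ) : ℝ) * ‖z‖ ^ (q - p) * ‖koebeNumerator p q (z ^ 2)‖
      ≤ (q.factorial * (p - 1).factorial : ℕ) * 1 * (p + q - 1).choose (p - 1) := by
        gcongr
        · exact pow_le_one₀ (norm_nonneg z) hz.le
        · exact norm_koebeNumerator_le p q hp (hp.trans_le hpq) hz2
    _ = _ := by push_cast; ring

theorem koebeHigherSchwarzian_comm (p q : ℕ) (z : ℂ) :
    koebeHigherSchwarzian p q z = koebeHigherSchwarzian q p z := by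
  unfold koebeHigherSchwarzian
  congr 1
  refine tsum_congr fun n => ?_
  rw [max_comm, show 2 * n - p - q = 2 * n - q - p by omega, mul_right_comm (n : ℂ)]

/-- Pointwise bound for the higher-order Schwarzian of the Koebe function:
`|S_κ^{[p,q]}(z)| ≤ (p+q-1)!/|1-z²|^{p+q}`. -/
theorem stmt3 (p q : ℕ) (hp : 0 < p) (hq : 0 < q) (z : ℂ) (hz : z ∈ unitDisk) :
    ‖koebeHigherSchwarzian p q z‖ ≤ ((p + q - 1).factorial : ℝ) / ‖1 - z ^ 2‖ ^ (p + q) := by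
  rcases le_total p q with hpq | hqp
  · exact norm_koebeHigherSchwarzian_le_of_le p q hp hpq hz
  · rw [koebeHigherSchwarzian_comm, add_comm p q]
    exact norm_koebeHigherSchwarzian_le_of_le q p hq hqp hz
end
end

section
/- Let q be a positive integer. Then for every real t with 0 ≤ t < 1, Σ_{n=q}^∞ [ (n!/(n-q)!)² / n ] · t^{2n-2q} ≤ (2q-1)!/(1-t²)^{2q}. -/
/-!
Put `r = t²` and `k = n - q`. The `n`-th term is `(n)_q² / n · r^k` with `(n)_q = n!/(n-q)!`,
and `(n)_q² ≤ n · (n+q-1)_{2q-1}` because `(n-1)_{q-1} ≤ (n+q-1)_{q-1}`. Since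
`(n+q-1)_{2q-1} = (2q-1)! · C(k+2q-1, 2q-1)`, the series is dominated termwise by
`(2q-1)! · Σ_k C(k+2q-1, 2q-1) r^k = (2q-1)! / (1-r)^{2q}`.
-/

open Nat

theorem Nat.descFactorial_succ_sq_le (n q : ℕ) :
    n.descFactorial (q + 1) ^ 2 ≤ n * (n + q).descFactorial (2 * q + 1) := by
  cases n with
  | zero => simp
  | succ n =>
    have hsplit : (n + 1 + q).descFactorial (2 * q + 1) =
        (n + 1).descFactorial (q + 1) * (n + 1 + q).descFactorial q := by
      rw [← descFactorial_mul_descFactorial (show q ≤ 2 * q + 1 by omega),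
        show n + 1 + q - q = n + 1 by omega, show 2 * q + 1 - q = q + 1 by omega]
    have hmono : n.descFactorial q ≤ (n + 1 + q).descFactorial q := descFactorial_le q (by omega)
    rw [hsplit, succ_descFactorial_succ]
    calc ((n + 1) * n.descFactorial q) ^ 2
        = (n + 1) * ((n + 1) * n.descFactorial q * n.descFactorial q) := by ring
      _ ≤ (n + 1) * ((n + 1) * n.descFactorial q * (n + 1 + q).descFactorial q) := by gcongr

theorem factorial_add_div_sq_div_le (k q : ℕ) (hq : 0 < q) :
    (((k + q)! : ℝ) / k !) ^ 2 / (k + q : ℕ) ≤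
      (2 * q - 1)! * ((k + (2 * q - 1)).choose (2 * q - 1) : ℝ) := by
  obtain ⟨p, rfl⟩ : ∃ p, q = p + 1 := ⟨q - 1, by omega⟩
  have hdesc : ((k + (p + 1))! : ℝ) / k ! = (k + (p + 1)).descFactorial (p + 1) := by
    rw [div_eq_iff (by positivity), ← factorial_mul_descFactorial (by omega : p + 1 ≤ k + (p + 1)),
      Nat.add_sub_cancel]
    push_cast
    ring
  rw [hdesc, show 2 * (p + 1) - 1 = 2 * p + 1 by omega, ← Nat.cast_mul,
    ← descFactorial_eq_factorial_mul_choose, show k + (2 * p + 1) = k + (p + 1) + p by omega,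
    div_le_iff₀ (by positivity), mul_comm]
  exact_mod_cast Nat.descFactorial_succ_sq_le (k + (p + 1)) p

/-- The series bound `Σ_{n≥q} (n!/(n-q)!)²/n · t^{2n-2q} ≤ (2q-1)!/(1-t²)^{2q}`
for `0 ≤ t < 1`. -/
theorem stmt13 (q : ℕ) (hq : 0 < q) (t : ℝ) (ht0 : 0 ≤ t) (ht1 : t < 1) :
    (∑' n : ℕ, if q ≤ n then
        ((n.factorial : ℝ) / ((n - q).factorial : ℝ)) ^ 2 / (n : ℝ) * t ^ (2 * n - 2 * q)
      else 0) ≤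
      ((2 * q - 1).factorial : ℝ) / (1 - t ^ 2) ^ (2 * q) := by
  have hr : ‖t ^ 2‖ < 1 := by
    rw [Real.norm_eq_abs, abs_of_nonneg (sq_nonneg t)]
    nlinarith
  have hG := (hasSum_choose_mul_geometric_of_norm_lt_one (2 * q - 1) hr).mul_left
    ((2 * q - 1)! : ℝ)
  have hterm (k : ℕ) : (((k + q)! : ℝ) / k !) ^ 2 / (k + q : ℕ) * (t ^ 2) ^ k ≤
      (2 * q - 1)! * ((k + (2 * q - 1)).choose (2 * q - 1) * (t ^ 2) ^ k) := by
    rw [← mul_assoc]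
    exact mul_le_mul_of_nonneg_right (factorial_add_div_sq_div_le k q hq) (by positivity)
  rw [← (add_left_injective q).tsum_eq]
  · simp only [Nat.le_add_left, if_true, Nat.add_sub_cancel, Nat.mul_add, pow_mul]
    calc _ ≤ _ := Summable.tsum_le_tsum hterm
            (hG.summable.of_nonneg_of_le (fun k => by positivity) hterm) hG.summable
      _ = _ := by rw [hG.tsum_eq, show 2 * q - 1 + 1 = 2 * q by omega, mul_one_div, pow_mul]
  · intro n hn
    by_cases h : q ≤ n
    · exact ⟨n - q, Nat.sub_add_cancel h⟩
    · exact absurd (if_neg h) hn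
end

section
/- Let p, q be positive integers. Then sup_{z∈Δ} |S_κ^{[p,q]}(z)|(1-|z|²)^{p+q} = (p+q-1)!, where S_κ^{[p,q]} is the higher-order Schwarzian derivative of the Koebe function. -/
open MeasureTheory Finset

noncomputable section

/-! Expanding the logarithm, `-S(z) = ∑ c n z^(2n-p-q)` with `c n = n^{(p)} (n-1)^{(q-1)}`, where
`m^{(k)}` is the falling factorial. With `d = p + q - 1` the coefficient is squeezed,
`(n-1)^{(d)} ≤ c n ≤ (n - max p q + d)^{(d)}`, the upper bound (for `p ≤ q`) because
`n^{(p)} ≤ n^p ≤ (n+p-1)^{(p)}`. As `∑ (j+d)^{(d)} x^j = d! / (1-x)^(d+1)`, comparing term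
by term gives `|S(z)| (1-|z|²)^(p+q) ≤ d!` on the disk and `d! r^(p+q) ≤ |S(r)| (1-r²)^(p+q)`
for `0 ≤ r < 1`; letting `r → 1` identifies the supremum. -/

open Filter Topology

namespace Nat

theorem descFactorial_eq_mul_sub_one {n k : ℕ} (hk : 0 < k) :
    n.descFactorial k = n * (n - 1).descFactorial (k - 1) := by
  obtain ⟨k, rfl⟩ := Nat.exists_eq_add_of_lt hk
  cases n with
  | zero => simp
  | succ n => simpa using succ_descFactorial_succ n k

end Nat

theorem hasSum_descFactorial_mul_geometric_s15 {𝕜 : Type*} [NormedField 𝕜]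
    [HasSummableGeomSeries 𝕜] (k : ℕ) {x : 𝕜} (hx : ‖x‖ < 1) :
    HasSum (fun n ↦ ((n + k).descFactorial k : 𝕜) * x ^ n)
      (k.factorial / (1 - x) ^ (k + 1)) := by
  have h := (hasSum_choose_mul_geometric_of_norm_lt_one k hx).mul_left (k.factorial : 𝕜)
  rw [mul_one_div] at h
  simpa only [Nat.descFactorial_eq_factorial_mul_choose, Nat.cast_mul, mul_assoc] using h

theorem HasSum.of_nat_add {G : Type*} [AddCommGroup G] [TopologicalSpace G]
    [IsTopologicalAddGroup G] {f : ℕ → G} {k : ℕ} {a : G} (hf : ∀ n < k, f n = 0)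
    (h : HasSum (fun n ↦ f (n + k)) a) : HasSum f a := by
  have hzero : ∑ i ∈ Finset.range k, f i = 0 :=
    Finset.sum_eq_zero fun i hi ↦ hf i (Finset.mem_range.mp hi)
  exact (hasSum_nat_add_iff' k).mp (by rwa [hzero, sub_zero])

/-- The coefficient of `z ^ (2 * n - p - q)` in `-koebeHigherSchwarzian p q z`. -/
def koebeCoeff (p q n : ℕ) : ℕ :=
  n.descFactorial p * (n - 1).descFactorial (q - 1)

section Coefficients

variable {p q : ℕ}

theorem koebeCoeff_comm (hp : 0 < p) (hq : 0 < q) (n : ℕ) :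
    koebeCoeff p q n = koebeCoeff q p n := by
  simp only [koebeCoeff, Nat.descFactorial_eq_mul_sub_one hp, Nat.descFactorial_eq_mul_sub_one hq]
  ring

theorem koebeCoeff_eq_zero_of_lt (hp : 0 < p) {n : ℕ} (hn : n < max p q) :
    koebeCoeff p q n = 0 := by
  rcases lt_or_ge n p with hnp | hpn
  · simp [koebeCoeff, Nat.descFactorial_of_lt hnp]
  · have : n - 1 < q - 1 := by omega
    simp [koebeCoeff, Nat.descFactorial_of_lt this]

theorem koebeCoeff_mul_factorial (hq : 0 < q) {n : ℕ} (hn : max p q ≤ n) :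
    koebeCoeff p q n * (n * (n - p).factorial * (n - q).factorial) = n.factorial ^ 2 := by
  have hp : (n - p).factorial * n.descFactorial p = n.factorial :=
    Nat.factorial_mul_descFactorial (by omega)
  have hq' : (n - q).factorial * (n - 1).descFactorial (q - 1) = (n - 1).factorial := by
    rw [← Nat.factorial_mul_descFactorial (by omega : q - 1 ≤ n - 1),
      show n - 1 - (q - 1) = n - q by omega]
  rw [sq, koebeCoeff]
  nth_rw 1 [← hp]
  rw [← Nat.mul_factorial_pred (by omega : n ≠ 0), ← hq']
  ring

theorem descFactorial_le_koebeCoeff (hq : 0 < q) (n : ℕ) :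
    (n - 1).descFactorial (p + q - 1) ≤ koebeCoeff p q n := by
  rw [koebeCoeff, ← Nat.descFactorial_mul_descFactorial (by omega : q - 1 ≤ p + q - 1),
    show p + q - 1 - (q - 1) = p by omega]
  gcongr
  omega

theorem koebeCoeff_add_max_le (hp : 0 < p) (hq : 0 < q) (j : ℕ) :
    koebeCoeff p q (j + max p q) ≤ (j + (p + q - 1)).descFactorial (p + q - 1) := by
  wlog hpq : p ≤ q generalizing p q
  · rw [koebeCoeff_comm hp hq, max_comm, add_comm p q]
    exact this hq hp (by omega)
  rw [max_eq_right hpq, koebeCoeff,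
    ← Nat.descFactorial_mul_descFactorial (by omega : p ≤ p + q - 1),
    show j + (p + q - 1) - p = j + q - 1 by omega, show p + q - 1 - p = q - 1 by omega,
    show j + (p + q - 1) = j + q + p - 1 by omega, Nat.add_descFactorial_eq_ascFactorial',
    mul_comm]
  gcongr
  exact (Nat.descFactorial_le_pow _ _).trans (Nat.pow_succ_le_ascFactorial _ _)

end Coefficients

/-- The real majorant of `‖koebeHigherSchwarzian p q z‖`, attained on `[0, 1)`. -/
def koebeSeries (p q : ℕ) (r : ℝ) : ℝ :=
  ∑' n, (koebeCoeff p q n : ℝ) * r ^ (2 * n - p - q)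

section Series

variable {p q : ℕ} {r : ℝ}

theorem koebeSeries_nonneg (hr : 0 ≤ r) : 0 ≤ koebeSeries p q r :=
  tsum_nonneg fun _ ↦ by positivity

theorem norm_sq_lt_one_of_nonneg_of_lt_one (hr0 : 0 ≤ r) (hr1 : r < 1) : ‖r ^ 2‖ < 1 := by
  rw [norm_pow, Real.norm_of_nonneg hr0]
  exact pow_lt_one₀ hr0 hr1 two_ne_zero

theorem koebeCoeff_add_max_mul_pow_le (hp : 0 < p) (hq : 0 < q) (hr0 : 0 ≤ r) (hr1 : r ≤ 1)
    (j : ℕ) :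
    (koebeCoeff p q (j + max p q) : ℝ) * r ^ (2 * (j + max p q) - p - q) ≤
      ((j + (p + q - 1)).descFactorial (p + q - 1) : ℝ) * (r ^ 2) ^ j := by
  rw [← pow_mul]
  exact mul_le_mul (by exact_mod_cast koebeCoeff_add_max_le hp hq j)
    (pow_le_pow_of_le_one hr0 hr1 (by omega)) (by positivity) (by positivity)

theorem hasSum_koebeSeries (hp : 0 < p) (hq : 0 < q) (hr0 : 0 ≤ r) (hr1 : r < 1) :
    HasSum (fun n ↦ (koebeCoeff p q n : ℝ) * r ^ (2 * n - p - q)) (koebeSeries p q r) := by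
  refine Summable.hasSum ((summable_nat_add_iff (max p q)).mp ?_)
  refine Summable.of_nonneg_of_le (fun _ ↦ by positivity)
    (koebeCoeff_add_max_mul_pow_le hp hq hr0 hr1.le) ?_
  exact (hasSum_descFactorial_mul_geometric_s15 _
    (norm_sq_lt_one_of_nonneg_of_lt_one hr0 hr1)).summable

theorem koebeSeries_le (hp : 0 < p) (hq : 0 < q) (hr0 : 0 ≤ r) (hr1 : r < 1) :
    koebeSeries p q r ≤ (p + q - 1).factorial / (1 - r ^ 2) ^ (p + q) := by
  have hgeom := hasSum_descFactorial_mul_geometric_s15 (p + q - 1)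
    (norm_sq_lt_one_of_nonneg_of_lt_one hr0 hr1)
  rw [show p + q - 1 + 1 = p + q by omega] at hgeom
  have hshift := (summable_nat_add_iff (max p q)).mpr (hasSum_koebeSeries hp hq hr0 hr1).summable
  have hsum : HasSum (fun n ↦ (koebeCoeff p q n : ℝ) * r ^ (2 * n - p - q))
      (∑' j, (koebeCoeff p q (j + max p q) : ℝ) * r ^ (2 * (j + max p q) - p - q)) :=
    hshift.hasSum.of_nat_add fun n hn ↦ by
      rw [koebeCoeff_eq_zero_of_lt hp hn, Nat.cast_zero, zero_mul]
  rw [koebeSeries, hsum.tsum_eq]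
  exact hasSum_le (koebeCoeff_add_max_mul_pow_le hp hq hr0 hr1.le) hshift.hasSum hgeom

theorem le_koebeSeries (hp : 0 < p) (hq : 0 < q) (hr0 : 0 ≤ r) (hr1 : r < 1) :
    (p + q - 1).factorial * r ^ (p + q) / (1 - r ^ 2) ^ (p + q) ≤ koebeSeries p q r := by
  have hgeom := (hasSum_descFactorial_mul_geometric_s15 (p + q - 1)
    (norm_sq_lt_one_of_nonneg_of_lt_one hr0 hr1)).mul_right (r ^ (p + q))
  rw [show p + q - 1 + 1 = p + q by omega, div_mul_eq_mul_div] at hgeom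
  have hminor : HasSum (fun n ↦ ((n - 1).descFactorial (p + q - 1) : ℝ) * r ^ (2 * n - p - q))
      ((p + q - 1).factorial * r ^ (p + q) / (1 - r ^ 2) ^ (p + q)) := by
    refine HasSum.of_nat_add (k := p + q) (fun n hn ↦ ?_) ?_
    · rw [Nat.descFactorial_of_lt (by omega), Nat.cast_zero, zero_mul]
    · refine hgeom.congr_fun fun j ↦ ?_
      rw [show j + (p + q) - 1 = j + (p + q - 1) by omega, mul_assoc, ← pow_mul, ← pow_add,
        show 2 * (j + (p + q)) - p - q = 2 * j + (p + q) by omega]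
  exact hasSum_le (fun n ↦ by gcongr; exact descFactorial_le_koebeCoeff hq n) hminor
    (hasSum_koebeSeries hp hq hr0 hr1)

end Series

section Schwarzian

variable {p q : ℕ}

theorem koebeHigherSchwarzian_eq_neg_tsum (hp : 0 < p) (hq : 0 < q) (z : ℂ) :
    koebeHigherSchwarzian p q z = -∑' n, (koebeCoeff p q n : ℂ) * z ^ (2 * n - p - q) := by
  rw [koebeHigherSchwarzian]
  congr 2 with n
  split_ifs with hn
  · have hn0 : (n : ℂ) ≠ 0 := Nat.cast_ne_zero.mpr (by omega)
    have hcoeff := congrArg (Nat.cast : ℕ → ℂ) (koebeCoeff_mul_factorial hq hn)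
    push_cast at hcoeff
    rw [← hcoeff]
    field_simp [Nat.cast_ne_zero.mpr (Nat.factorial_ne_zero _)]
  · rw [koebeCoeff_eq_zero_of_lt hp (not_le.mp hn), Nat.cast_zero, zero_mul]

theorem norm_koebeHigherSchwarzian_le (hp : 0 < p) (hq : 0 < q) {z : ℂ} (hz : ‖z‖ < 1) :
    ‖koebeHigherSchwarzian p q z‖ ≤ koebeSeries p q ‖z‖ := by
  have hnorm (n : ℕ) : ‖(koebeCoeff p q n : ℂ) * z ^ (2 * n - p - q)‖ =
      (koebeCoeff p q n : ℝ) * ‖z‖ ^ (2 * n - p - q) := by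
    rw [norm_mul, norm_pow, Complex.norm_natCast]
  rw [koebeHigherSchwarzian_eq_neg_tsum hp hq, norm_neg, koebeSeries, ← tsum_congr hnorm]
  exact norm_tsum_le_tsum_norm <| by
    simpa only [hnorm] using (hasSum_koebeSeries hp hq (norm_nonneg z) hz).summable

theorem norm_koebeHigherSchwarzian_ofReal (hp : 0 < p) (hq : 0 < q) {r : ℝ} (hr : 0 ≤ r) :
    ‖koebeHigherSchwarzian p q r‖ = koebeSeries p q r := by
  rw [koebeHigherSchwarzian_eq_neg_tsum hp hq, norm_neg,
    ← Real.norm_of_nonneg (koebeSeries_nonneg hr), ← Complex.norm_real, koebeSeries,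
    Complex.ofReal_tsum]
  push_cast
  rfl

theorem norm_koebeHigherSchwarzian_mul_le (hp : 0 < p) (hq : 0 < q) {z : ℂ} (hz : ‖z‖ < 1) :
    ‖koebeHigherSchwarzian p q z‖ * (1 - ‖z‖ ^ 2) ^ (p + q) ≤ (p + q - 1).factorial := by
  have hpos : 0 < (1 - ‖z‖ ^ 2) ^ (p + q) :=
    pow_pos (sub_pos.mpr (pow_lt_one₀ (norm_nonneg z) hz two_ne_zero)) _
  calc ‖koebeHigherSchwarzian p q z‖ * (1 - ‖z‖ ^ 2) ^ (p + q)
      ≤ koebeSeries p q ‖z‖ * (1 - ‖z‖ ^ 2) ^ (p + q) := by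
        gcongr
        exact norm_koebeHigherSchwarzian_le hp hq hz
    _ ≤ (p + q - 1).factorial / (1 - ‖z‖ ^ 2) ^ (p + q) * (1 - ‖z‖ ^ 2) ^ (p + q) := by
        gcongr
        exact koebeSeries_le hp hq (norm_nonneg z) hz
    _ = (p + q - 1).factorial := div_mul_cancel₀ _ hpos.ne'

theorem factorial_mul_pow_le_norm_koebeHigherSchwarzian_ofReal_mul (hp : 0 < p) (hq : 0 < q)
    {r : ℝ} (hr0 : 0 ≤ r) (hr1 : r < 1) :
    (p + q - 1).factorial * r ^ (p + q) ≤
      ‖koebeHigherSchwarzian p q r‖ * (1 - ‖(r : ℂ)‖ ^ 2) ^ (p + q) := by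
  have hpos : 0 < (1 - r ^ 2) ^ (p + q) :=
    pow_pos (sub_pos.mpr (pow_lt_one₀ hr0 hr1 two_ne_zero)) _
  rw [norm_koebeHigherSchwarzian_ofReal hp hq hr0, Complex.norm_real, Real.norm_of_nonneg hr0,
    ← div_le_iff₀ hpos]
  exact le_koebeSeries hp hq hr0 hr1

end Schwarzian

/-- The growth-space norm of the higher-order Schwarzian of the Koebe function:
`sup_{z∈Δ} |S_κ^{[p,q]}(z)|(1-|z|²)^{p+q} = (p+q-1)!`. -/
theorem stmt15 (p q : ℕ) (hp : 0 < p) (hq : 0 < q) :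
    ⨆ z : unitDisk, ‖koebeHigherSchwarzian p q (z : ℂ)‖ * (1 - ‖(z : ℂ)‖ ^ 2) ^ (p + q) =
      ((p + q - 1).factorial : ℝ) := by
  have : Nonempty unitDisk := ⟨⟨0, by simp [unitDisk]⟩⟩
  have hle (z : unitDisk) := norm_koebeHigherSchwarzian_mul_le hp hq z.2
  refine le_antisymm (ciSup_le hle) ?_
  have hlim : Tendsto (fun r : ℝ ↦ ((p + q - 1).factorial : ℝ) * r ^ (p + q)) (𝓝[<] 1)
      (𝓝 (p + q - 1).factorial) := by
    have hcont : Continuous fun r : ℝ ↦ ((p + q - 1).factorial : ℝ) * r ^ (p + q) := by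
      fun_prop
    simpa using (hcont.tendsto 1).mono_left nhdsWithin_le_nhds
  refine le_of_tendsto hlim ?_
  filter_upwards [Ioo_mem_nhdsLT zero_lt_one] with r ⟨hr0, hr1⟩
  have hr : (r : ℂ) ∈ unitDisk := by simpa [unitDisk, abs_of_pos hr0] using hr1
  exact (factorial_mul_pow_le_norm_koebeHigherSchwarzian_ofReal_mul hp hq hr0.le hr1).trans
    (le_ciSup ⟨_, Set.forall_mem_range.2 hle⟩ ⟨r, hr⟩)
end
end

section
/- Let p, q be positive integers with p ≠ q. Then (2p-1)!(2q-1)! > [(p+q-1)!]²; consequently √((2p-1)!(2q-1)!) > (p+q-1)!. -/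
/-!
The factorial is strictly log-convex: moving the two arguments of `a! * b!` apart while keeping
`a + b` fixed multiplies the product by `(b + 1) / (a + 1) > 1` at each step. Starting from the
balanced pair `(m, m)` with `m = p + q - 1` and moving apart `|p - q|` times reaches
`(2p - 1, 2q - 1)`.
-/

open Nat

theorem Nat.succ_factorial_mul_factorial_lt {a b : ℕ} (h : a < b) :
    (a + 1)! * b ! < a ! * (b + 1)! := by
  rw [factorial_succ, factorial_succ]
  have hpos : 0 < a ! * b ! := by positivity
  calc (a + 1) * a ! * b ! = (a + 1) * (a ! * b !) := by ring
    _ < (b + 1) * (a ! * b !) := Nat.mul_lt_mul_of_pos_right (by omega) hpos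
    _ = a ! * ((b + 1) * b !) := by ring

theorem Nat.factorial_add_succ_sq_lt (a d : ℕ) :
    (a + d + 1)! ^ 2 < a ! * (a + 2 * d + 2)! := by
  induction d generalizing a with
  | zero => simpa [sq] using succ_factorial_mul_factorial_lt (lt_add_one a)
  | succ d ih =>
    calc (a + (d + 1) + 1)! ^ 2 = (a + 1 + d + 1)! ^ 2 := by ring_nf
      _ < (a + 1)! * (a + 1 + 2 * d + 2)! := ih (a + 1)
      _ = (a + 1)! * (a + 2 * d + 2 + 1)! := by ring_nf
      _ < a ! * (a + 2 * d + 2 + 1 + 1)! :=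
        succ_factorial_mul_factorial_lt (by omega)
      _ = a ! * (a + 2 * (d + 1) + 2)! := by ring_nf

theorem Nat.factorial_sq_lt_factorial_mul_factorial {m a b : ℕ} (hsum : a + b = 2 * m)
    (hne : a ≠ b) : m ! ^ 2 < a ! * b ! := by
  wlog hab : a < b generalizing a b
  · rw [mul_comm]
    exact this (by omega) hne.symm (by omega)
  obtain ⟨d, rfl⟩ : ∃ d, m = a + d + 1 := ⟨m - a - 1, by omega⟩
  obtain rfl : b = a + 2 * d + 2 := by omega
  exact factorial_add_succ_sq_lt a d

/-- For positive integers `p ≠ q`, `(2p-1)!(2q-1)! > ((p+q-1)!)²` and hence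
`√((2p-1)!(2q-1)!) > (p+q-1)!`. -/
theorem stmt16 (p q : ℕ) (hp : 0 < p) (hq : 0 < q) (hne : p ≠ q) :
    ((p + q - 1).factorial) ^ 2 < (2 * p - 1).factorial * (2 * q - 1).factorial ∧
    ((p + q - 1).factorial : ℝ) <
      Real.sqrt (((2 * p - 1).factorial : ℝ) * ((2 * q - 1).factorial : ℝ)) := by
  have key : (p + q - 1)! ^ 2 < (2 * p - 1)! * (2 * q - 1)! :=
    factorial_sq_lt_factorial_mul_factorial (by omega) (by omega)
  refine ⟨key, Real.lt_sqrt_of_sq_lt ?_⟩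
  exact_mod_cast key
end
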